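/- Let B = A₁ + A₂ = A₁A₂ be a skew left brace which is both the sum and product of two abelian subbraces A₁ and A₂. Then Z(B) = (Z(B) ∩ A₁) + (Z(B) ∩ A₂) and A₁ ∩ A₂ ⊆ Z(B), i.e. the centre is a factorised ideal of B. -/
import Mathlib


/-- A skew left brace: a set with two group structures `(B,+)` and `(B,·)`
satisfying `a(b+c) = ab - a + ac`. -/
class SkewBrace (B : Type*) extends AddGroup B, Group B where
  mul_add_dist : ∀ a b c : B, a * (b + c) = a * b + -a + a * c

namespace SkewBrace

variable {B : Type*} [SkewBrace B]

/-- The lambda map `λ_a(b) = -a + ab`. -/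
def lam (a b : B) : B := -a + a * b

/-- The star product `a * b = -a + ab - b`. -/
def star (a b : B) : B := -a + a * b + -b

/-- A subbrace: a subgroup of `(B,+)` that is also a subgroup of `(B,·)`. -/
def IsSubbrace (S : Set B) : Prop :=
  ((0 : B) ∈ S ∧ (∀ a ∈ S, ∀ b ∈ S, a + b ∈ S) ∧ (∀ a ∈ S, -a ∈ S)) ∧
  ((1 : B) ∈ S ∧ (∀ a ∈ S, ∀ b ∈ S, a * b ∈ S) ∧ (∀ a ∈ S, a⁻¹ ∈ S))

/-- A left ideal: a subbrace with `B * S ⊆ S`. -/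
def IsLeftIdeal (S : Set B) : Prop :=
  IsSubbrace S ∧ ∀ b : B, ∀ a ∈ S, star b a ∈ S

/-- A strong left ideal: a left ideal normal in `(B,+)`. -/
def IsStrongLeftIdeal (S : Set B) : Prop :=
  IsLeftIdeal S ∧ ∀ b : B, ∀ a ∈ S, b + a + -b ∈ S

/-- An ideal: a strong left ideal which is also a right ideal. -/
def IsIdeal (S : Set B) : Prop :=
  IsStrongLeftIdeal S ∧ ∀ a ∈ S, ∀ b : B, star a b ∈ S

/-- A trivial subbrace: both operations coincide on it. -/
def IsTrivialSubbrace (S : Set B) : Prop :=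
  IsSubbrace S ∧ ∀ a ∈ S, ∀ b ∈ S, a * b = a + b

/-- An abelian subbrace: a trivial subbrace whose group is abelian. -/
def IsAbelianSubbrace (S : Set B) : Prop :=
  IsTrivialSubbrace S ∧ ∀ a ∈ S, ∀ b ∈ S, a + b = b + a

end SkewBrace

namespace SkewBrace

variable {B : Type*} [SkewBrace B]

lemma skew_mul_zero (a : B) : a * (0 : B) = a := by
  have h := mul_add_dist a 0 0
  rw [add_zero] at h
  have h2 : a * (0 : B) + 0 = a * 0 + (-a + a * 0) := by
    rw [add_zero, ← add_assoc]; exact h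
  have h3 := (add_left_cancel h2).symm
  -- h3 : -a + a * 0 = 0
  have := congrArg (fun t => a + t) h3
  simpa [add_neg_cancel_left] using this

lemma lam_add (a b c : B) : lam a (b + c) = lam a b + lam a c := by
  simp only [lam, mul_add_dist, add_assoc]

lemma mul_neg' (a b : B) : a * (-b) = (a + -(a * b)) + a := by
  have h := mul_add_dist a b (-b)
  rw [add_neg_cancel, skew_mul_zero] at h
  -- h : a = a * b + -a + a * (-b)
  have h2 : -(a * b + -a) + a = a * (-b) :=
    calc -(a * b + -a) + a = -(a * b + -a) + ((a * b + -a) + a * (-b)) := by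
          rw [← h]
      _ = a * (-b) := neg_add_cancel_left _ _
  rw [← h2, neg_add_rev, neg_neg]

lemma lam_mul (a b c : B) : lam (a * b) c = lam a (lam b c) := by
  simp only [lam]
  rw [mul_add_dist, mul_neg', mul_assoc]
  simp [add_assoc, neg_add_cancel_left, add_neg_cancel_left]

lemma mul_eq_add_lam (a b : B) : a * b = a + lam a b := by
  rw [lam, add_neg_cancel_left]

end SkewBrace

open SkewBrace in
/-- If `B = A₁ + A₂ = A₁A₂` with `A₁`, `A₂` abelian subbraces, then the centre
`Z(B) = Soc(B) ∩ Z(B,·)` is a factorised ideal. -/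
theorem centre_factorised {B : Type*} [SkewBrace B] (A₁ A₂ : Set B)
    (h₁ : IsAbelianSubbrace A₁) (h₂ : IsAbelianSubbrace A₂)
    (hsum : ∀ x : B, ∃ a ∈ A₁, ∃ b ∈ A₂, x = a + b)
    (hprod : ∀ x : B, ∃ a ∈ A₁, ∃ b ∈ A₂, x = a * b) :
    {a : B | (∀ b : B, lam a b = b ∧ a + b = b + a) ∧ ∀ b : B, a * b = b * a} =
      {x : B | ∃ a ∈ {a : B | (∀ b : B, lam a b = b ∧ a + b = b + a) ∧
          ∀ b : B, a * b = b * a} ∩ A₁,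
        ∃ c ∈ {a : B | (∀ b : B, lam a b = b ∧ a + b = b + a) ∧
          ∀ b : B, a * b = b * a} ∩ A₂, x = a + c} ∧
    A₁ ∩ A₂ ⊆ {a : B | (∀ b : B, lam a b = b ∧ a + b = b + a) ∧
      ∀ b : B, a * b = b * a} := by
  obtain ⟨⟨-, ht₁⟩, hc₁⟩ := h₁
  obtain ⟨⟨-, ht₂⟩, hc₂⟩ := h₂
  -- λ_a fixes A_i pointwise for a ∈ A_i
  have lamA₁ : ∀ a ∈ A₁, ∀ b ∈ A₁, lam a b = b := fun a ha b hb => by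
    rw [lam, ht₁ a ha b hb, neg_add_cancel_left]
  have lamA₂ : ∀ a ∈ A₂, ∀ b ∈ A₂, lam a b = b := fun a ha b hb => by
    rw [lam, ht₂ a ha b hb, neg_add_cancel_left]
  -- Part 1: A₁ ∩ A₂ ⊆ Z(B)
  have hinter : ∀ d : B, d ∈ A₁ → d ∈ A₂ →
      (∀ b : B, lam d b = b ∧ d + b = b + d) ∧ ∀ b : B, d * b = b * d := by
    intro d hd1 hd2
    have hlam : ∀ b : B, lam d b = b := by
      intro b
      obtain ⟨x, hx, y, hy, rfl⟩ := hsum b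
      rw [lam_add, lamA₁ d hd1 x hx, lamA₂ d hd2 y hy]
    have hadd : ∀ b : B, d + b = b + d := by
      intro b
      obtain ⟨x, hx, y, hy, rfl⟩ := hprod b
      rw [mul_eq_add_lam]
      have h1 : d + lam x y = lam x y + d := by
        have e1 : lam x (d + y) = d + lam x y := by
          rw [lam_add, lamA₁ x hx d hd1]
        have e2 : lam x (y + d) = lam x y + d := by
          rw [lam_add, lamA₁ x hx d hd1]
        rw [← e1, ← e2, hc₂ d hd2 y hy]
      calc d + (x + lam x y) = (d + x) + lam x y := (add_assoc _ _ _).symm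
        _ = (x + d) + lam x y := by rw [hc₁ d hd1 x hx]
        _ = x + (d + lam x y) := add_assoc _ _ _
        _ = x + (lam x y + d) := by rw [h1]
        _ = (x + lam x y) + d := (add_assoc _ _ _).symm
    refine ⟨fun b => ⟨hlam b, hadd b⟩, fun b => ?_⟩
    have hlb : lam b d = d := by
      obtain ⟨x, hx, y, hy, rfl⟩ := hprod b
      rw [lam_mul, lamA₂ y hy d hd2, lamA₁ x hx d hd1]
    rw [mul_eq_add_lam d b, hlam b, mul_eq_add_lam b d, hlb, hadd b]
  refine ⟨Set.ext fun z => ⟨?_, ?_⟩, fun d hd => hinter d hd.1 hd.2⟩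
  · -- Z(B) ⊆ (Z ∩ A₁) + (Z ∩ A₂)
    rintro ⟨hz1, hz2⟩
    obtain ⟨c₁, hc1, c₂, hc2, hzeq⟩ := hprod z
    subst hzeq
    -- λ_{c₁} = id
    have hl1 : ∀ b : B, lam c₁ b = b := by
      have hfix2 : ∀ y ∈ A₂, lam c₁ y = y := by
        intro y hy
        have h := (hz1 y).1
        rwa [lam_mul, lamA₂ c₂ hc2 y hy] at h
      intro b
      obtain ⟨x, hx, y, hy, rfl⟩ := hsum b
      rw [lam_add, lamA₁ c₁ hc1 x hx, hfix2 y hy]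
    -- λ_{c₂} = id
    have hl2 : ∀ b : B, lam c₂ b = b := by
      intro b
      have h := (hz1 b).1
      rwa [lam_mul, hl1 (lam c₂ b)] at h
    have hsum12 : c₁ * c₂ = c₁ + c₂ := by rw [mul_eq_add_lam, hl1]
    -- additive centrality pieces
    have hadd1 : ∀ y ∈ A₂, c₁ + y = y + c₁ := by
      intro y hy
      have h := (hz1 y).2
      rw [hsum12] at h
      have h2 : (c₁ + y) + c₂ = (y + c₁) + c₂ :=
        calc (c₁ + y) + c₂ = c₁ + (y + c₂) := add_assoc _ _ _
          _ = c₁ + (c₂ + y) := by rw [hc₂ y hy c₂ hc2]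
          _ = (c₁ + c₂) + y := (add_assoc _ _ _).symm
          _ = y + (c₁ + c₂) := h
          _ = (y + c₁) + c₂ := (add_assoc _ _ _).symm
      exact add_right_cancel h2
    have hadd2 : ∀ x ∈ A₁, c₂ + x = x + c₂ := by
      intro x hx
      have h := (hz1 x).2
      rw [hsum12] at h
      have h2 : c₁ + (c₂ + x) = c₁ + (x + c₂) :=
        calc c₁ + (c₂ + x) = (c₁ + c₂) + x := (add_assoc _ _ _).symm
          _ = x + (c₁ + c₂) := h
          _ = (x + c₁) + c₂ := (add_assoc _ _ _).symm
          _ = (c₁ + x) + c₂ := by rw [hc₁ x hx c₁ hc1]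
          _ = c₁ + (x + c₂) := add_assoc _ _ _
      exact add_left_cancel h2
    have haddc1 : ∀ b : B, c₁ + b = b + c₁ := by
      intro b
      obtain ⟨x, hx, y, hy, rfl⟩ := hsum b
      calc c₁ + (x + y) = (c₁ + x) + y := (add_assoc _ _ _).symm
        _ = (x + c₁) + y := by rw [hc₁ c₁ hc1 x hx]
        _ = x + (c₁ + y) := add_assoc _ _ _
        _ = x + (y + c₁) := by rw [hadd1 y hy]
        _ = (x + y) + c₁ := (add_assoc _ _ _).symm
    have haddc2 : ∀ b : B, c₂ + b = b + c₂ := by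
      intro b
      obtain ⟨x, hx, y, hy, rfl⟩ := hsum b
      calc c₂ + (x + y) = (c₂ + x) + y := (add_assoc _ _ _).symm
        _ = (x + c₂) + y := by rw [hadd2 x hx]
        _ = x + (c₂ + y) := add_assoc _ _ _
        _ = x + (y + c₂) := by rw [hc₂ c₂ hc2 y hy]
        _ = (x + y) + c₂ := (add_assoc _ _ _).symm
    -- multiplicative centrality of c₁
    have hm1A2 : ∀ y ∈ A₂, c₁ * y = y * c₁ := by
      intro y hy
      have h := hz2 y
      have key : c₂ * y = y * c₂ := by
        rw [ht₂ c₂ hc2 y hy, ht₂ y hy c₂ hc2, hc₂ c₂ hc2 y hy]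
      have h2 : (c₁ * y) * c₂ = (y * c₁) * c₂ :=
        calc (c₁ * y) * c₂ = c₁ * (y * c₂) := mul_assoc _ _ _
          _ = c₁ * (c₂ * y) := by rw [key]
          _ = (c₁ * c₂) * y := (mul_assoc _ _ _).symm
          _ = y * (c₁ * c₂) := h
          _ = (y * c₁) * c₂ := (mul_assoc _ _ _).symm
      exact mul_right_cancel h2
    have hfix1 : ∀ b : B, lam b c₁ = c₁ := by
      have h2 : ∀ y ∈ A₂, lam y c₁ = c₁ := by
        intro y hy
        have hyc : y * c₁ = y + c₁ := by
          rw [← hm1A2 y hy, mul_eq_add_lam, hl1, haddc1]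
        rw [lam, hyc, neg_add_cancel_left]
      intro b
      obtain ⟨x, hx, y, hy, rfl⟩ := hprod b
      rw [lam_mul, h2 y hy, lamA₁ x hx c₁ hc1]
    have hmc1 : ∀ b : B, c₁ * b = b * c₁ := by
      intro b
      rw [mul_eq_add_lam c₁ b, hl1 b, mul_eq_add_lam b c₁, hfix1 b, haddc1 b]
    -- multiplicative centrality of c₂
    have hm2A1 : ∀ x ∈ A₁, c₂ * x = x * c₂ := by
      intro x hx
      have h := hz2 x
      have key : x * c₁ = c₁ * x := by
        rw [ht₁ x hx c₁ hc1, ht₁ c₁ hc1 x hx, hc₁ x hx c₁ hc1]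
      have h2 : c₁ * (c₂ * x) = c₁ * (x * c₂) :=
        calc c₁ * (c₂ * x) = (c₁ * c₂) * x := (mul_assoc _ _ _).symm
          _ = x * (c₁ * c₂) := h
          _ = (x * c₁) * c₂ := (mul_assoc _ _ _).symm
          _ = (c₁ * x) * c₂ := by rw [key]
          _ = c₁ * (x * c₂) := mul_assoc _ _ _
      exact mul_left_cancel h2
    have hfix2' : ∀ b : B, lam b c₂ = c₂ := by
      have h2 : ∀ x ∈ A₁, lam x c₂ = c₂ := by
        intro x hx
        have hxc : x * c₂ = x + c₂ := by
          rw [← hm2A1 x hx, mul_eq_add_lam, hl2, haddc2]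
        rw [lam, hxc, neg_add_cancel_left]
      intro b
      obtain ⟨x, hx, y, hy, rfl⟩ := hprod b
      rw [lam_mul, lamA₂ y hy c₂ hc2, h2 x hx]
    have hmc2 : ∀ b : B, c₂ * b = b * c₂ := by
      intro b
      rw [mul_eq_add_lam c₂ b, hl2 b, mul_eq_add_lam b c₂, hfix2' b, haddc2 b]
    exact ⟨c₁, ⟨⟨fun b => ⟨hl1 b, haddc1 b⟩, hmc1⟩, hc1⟩,
      c₂, ⟨⟨fun b => ⟨hl2 b, haddc2 b⟩, hmc2⟩, hc2⟩, hsum12⟩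
  · -- (Z ∩ A₁) + (Z ∩ A₂) ⊆ Z(B)
    rintro ⟨a, ⟨ha_z, -⟩, c, ⟨hc_z, -⟩, rfl⟩
    have hac : a * c = a + c := by rw [mul_eq_add_lam, (ha_z.1 c).1]
    have hlam : ∀ b : B, lam (a + c) b = b := by
      intro b
      rw [← hac, lam_mul, (hc_z.1 b).1, (ha_z.1 b).1]
    have haddac : ∀ b : B, (a + c) + b = b + (a + c) := by
      intro b
      calc (a + c) + b = a + (c + b) := add_assoc _ _ _
        _ = a + (b + c) := by rw [(hc_z.1 b).2]
        _ = (a + b) + c := (add_assoc _ _ _).symm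
        _ = (b + a) + c := by rw [(ha_z.1 b).2]
        _ = b + (a + c) := add_assoc _ _ _
    have hmul : ∀ b : B, (a + c) * b = b * (a + c) := by
      intro b
      rw [← hac]
      calc (a * c) * b = a * (c * b) := mul_assoc _ _ _
        _ = a * (b * c) := by rw [hc_z.2 b]
        _ = (a * b) * c := (mul_assoc _ _ _).symm
        _ = (b * a) * c := by rw [ha_z.2 b]
        _ = b * (a * c) := mul_assoc _ _ _
    exact ⟨fun b => ⟨hlam b, haddac b⟩, hmul⟩
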